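/- Let l ≥ 1 be an integer, let μ ∈ (0,1), η > 0 and q ∈ (1,2), and define C(s) = ((sᵀs)^{1−1/q} − η)/((sᵀs)^{1−1/q} + η) for s ∈ ℝ^l. Let y, y^d, F, F̂, v : ℕ → ℝ^l be sequences, set e_k := y_k − y^d_k and s_k := e_{k+1} − e_k + μ·e_k. Suppose that y_{k+2} − 2y_{k+1} + y_k = F_k + v_k holds for all k, that v_k = y^d_{k+2} − 2y^d_{k+1} + y^d_k − (2η/((s_kᵀs_k)^{1−1/q} + η))·(e_{k+1} − e_k) + C(s_k)·μ·e_k − μ·e_{k+1} − F̂_k for all k, and that there exists K ∈ ℕ with F̂_k = F_k for all k ≥ K. Then the tracking error converges: e_k → 0 as k → ∞. -/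
import Mathlib


open scoped InnerProductSpace
open Filter

lemma helperA_stmt18 (r : ℝ) (hr0 : 0 ≤ r) (hr1 : r < 1) (u b : ℕ → ℝ)
    (hu : ∀ n, 0 ≤ u n) (hrec : ∀ n, u (n+1) ≤ r * u n + b n)
    (hb : Tendsto b atTop (nhds 0)) : Tendsto u atTop (nhds 0) := by
  rw [Metric.tendsto_atTop]
  intro ε hε
  have hb' : ∀ᶠ n in atTop, |b n| < (1 - r) * ε / 2 := by
    have := Metric.tendsto_atTop.mp hb ((1 - r) * ε / 2) (by nlinarith)
    simpa [Real.dist_eq] using this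
  obtain ⟨N, hN⟩ := eventually_atTop.mp hb'
  have hind : ∀ m, u (N + m) ≤ r ^ m * u N + ε / 2 := by
    intro m
    induction m with
    | zero => simp; linarith [hε]
    | succ m ih =>
        have h1 := hrec (N + m)
        have h2 : b (N + m) ≤ (1 - r) * ε / 2 := (abs_le.mp (hN (N + m) (by omega)).le).2
        have h3 : r * u (N + m) ≤ r * (r ^ m * u N + ε / 2) :=
          mul_le_mul_of_nonneg_left ih hr0
        calc u (N + (m + 1)) = u ((N + m) + 1) := by ring_nf
          _ ≤ r * u (N + m) + b (N + m) := h1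
          _ ≤ r * (r ^ m * u N + ε / 2) + (1 - r) * ε / 2 := by linarith
          _ ≤ r ^ (m + 1) * u N + ε / 2 := by ring_nf; nlinarith
  have hpow : ∀ᶠ m in atTop, r ^ m * u N < ε / 2 := by
    have h := (tendsto_pow_atTop_nhds_zero_of_lt_one hr0 hr1).mul_const (u N)
    rw [zero_mul] at h
    exact h.eventually (gt_mem_nhds (by linarith))
  obtain ⟨M, hM⟩ := eventually_atTop.mp hpow
  refine ⟨N + M, fun n hn => ?_⟩
  have hNn : N ≤ n := by omega
  have h1 : u n ≤ r ^ (n - N) * u N + ε / 2 := by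
    have := hind (n - N); rwa [Nat.add_sub_cancel' hNn] at this
  have h2 : r ^ (n - N) ≤ r ^ M := pow_le_pow_of_le_one hr0 hr1.le (by omega)
  have h3 : r ^ (n - N) * u N ≤ r ^ M * u N := mul_le_mul_of_nonneg_right h2 (hu N)
  have := hM M le_rfl
  rw [Real.dist_eq, sub_zero, abs_of_nonneg (hu n)]
  linarith

lemma absC_le_stmt18 (η : ℝ) (hη : 0 < η) (a m M : ℝ) (hm : 0 < m) (hma : m ≤ a)
    (haM : a ≤ M) : |(a - η) / (a + η)| ≤ 1 - 2 * (min m η / (M + η)) := by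
  have haη : 0 < a + η := by linarith
  have hMη : 0 < M + η := by linarith
  rw [abs_div, abs_of_pos haη, div_le_iff₀ haη]
  have hmin : min m η ≤ min a η := min_le_min hma le_rfl
  have hdiv : min m η / (M + η) ≤ min a η / (a + η) :=
    div_le_div₀ (le_min (by linarith) hη.le) hmin haη (by linarith)
  have habs : |a - η| = a + η - 2 * min a η := by
    rcases le_total a η with h | h
    · rw [abs_of_nonpos (by linarith), min_eq_left h]; ring
    · rw [abs_of_nonneg (by linarith), min_eq_right h]; ring
  rw [habs]
  have : 2 * (min m η / (M + η)) * (a + η) ≤ 2 * (min a η / (a + η)) * (a + η) := by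
    nlinarith
  have h2 : min a η / (a + η) * (a + η) = min a η := div_mul_cancel₀ _ haη.ne'
  have key : 2 * ((m ⊓ η) / (M + η)) * (a + η) ≤ 2 * (a ⊓ η) := by nlinarith
  nlinarith [key]

/-- The control gain function C of Lemma 2. -/
noncomputable def Cfun (l : ℕ) (η q : ℝ) (s : EuclideanSpace ℝ (Fin l)) : ℝ :=
  (⟪s, s⟫_ℝ ^ (1 - 1 / q) - η) / (⟪s, s⟫_ℝ ^ (1 - 1 / q) + η)

/-- Corollary 3 (tracking conclusion, ν = 2): if the ultra-local-model estimate is exact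
from some time K onward, the tracking error e_k → 0. -/
theorem stmt_18 (l : ℕ) (hl : 1 ≤ l) (μ η q : ℝ)
    (hμ : μ ∈ Set.Ioo (0:ℝ) 1) (hη : 0 < η) (hq : q ∈ Set.Ioo (1:ℝ) 2)
    (y yd F Fhat v : ℕ → EuclideanSpace ℝ (Fin l))
    (e : ℕ → EuclideanSpace ℝ (Fin l)) (he : ∀ k, e k = y k - yd k)
    (s : ℕ → EuclideanSpace ℝ (Fin l)) (hs : ∀ k, s k = e (k + 1) - e k + μ • e k)
    (hulm : ∀ k, y (k + 2) - (2:ℝ) • y (k + 1) + y k = F k + v k)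
    (hctrl : ∀ k, v k = yd (k + 2) - (2:ℝ) • yd (k + 1) + yd k
      - (2 * η / (⟪s k, s k⟫_ℝ ^ (1 - 1 / q) + η)) • (e (k + 1) - e k)
      + (Cfun l η q (s k) * μ) • e k
      - μ • e (k + 1)
      - Fhat k)
    (K : ℕ) (hK : ∀ k ≥ K, Fhat k = F k) :
    Filter.Tendsto e Filter.atTop (nhds 0) := by
  obtain ⟨hμ0, hμ1⟩ := hμ
  obtain ⟨hq1, hq2⟩ := hq
  have hq0 : 0 < q := by linarith
  have hp : 0 < 1 - 1 / q := by
    have : 1 / q < 1 := by rw [div_lt_one hq0]; linarith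
    linarith
  -- Step 1: closed-loop sliding dynamics
  have key : ∀ k, K ≤ k → s (k + 1) = Cfun l η q (s k) • s k := by
    intro k hk
    have ha0 : (0:ℝ) ≤ ⟪s k, s k⟫_ℝ ^ (1 - 1 / q) :=
      Real.rpow_nonneg real_inner_self_nonneg _
    have haη : (0:ℝ) < ⟪s k, s k⟫_ℝ ^ (1 - 1 / q) + η := by linarith
    have hC : Cfun l η q (s k) = 1 - 2 * η / (⟪s k, s k⟫_ℝ ^ (1 - 1 / q) + η) := by
      obtain ⟨a, ha0', haeq⟩ : ∃ a, 0 ≤ a ∧ ⟪s k, s k⟫_ℝ ^ (1 - 1 / q) = a :=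
        ⟨_, ha0, rfl⟩
      rw [Cfun, haeq]
      have hne : a + η ≠ 0 := by linarith
      field_simp
      ring
    have h1 := hulm k
    rw [hctrl k, hK k hk] at h1
    set g : ℝ := 2 * η / (⟪s k, s k⟫_ℝ ^ (1 - 1 / q) + η) with hg
    rw [hC] at h1 ⊢
    rw [hs (k + 1), hs k]
    simp only [he] at h1 ⊢
    linear_combination (norm := module) h1
  -- |Cfun| ≤ 1, monotone decrease of ‖s‖ after K
  have habs1 : ∀ k, |Cfun l η q (s k)| ≤ 1 := by
    intro k
    have ha0 : (0:ℝ) ≤ ⟪s k, s k⟫_ℝ ^ (1 - 1 / q) :=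
      Real.rpow_nonneg real_inner_self_nonneg _
    rw [Cfun, abs_div, abs_of_pos (by linarith : (0:ℝ) < ⟪s k, s k⟫_ℝ ^ (1 - 1 / q) + η)]
    rw [div_le_one (by linarith)]
    rcases le_total (⟪s k, s k⟫_ℝ ^ (1 - 1 / q)) η with h | h
    · rw [abs_of_nonpos (by linarith)]; linarith
    · rw [abs_of_nonneg (by linarith)]; linarith
  have hmono : ∀ k, K ≤ k → ‖s (k + 1)‖ ≤ ‖s k‖ := by
    intro k hk
    rw [key k hk, norm_smul, Real.norm_eq_abs]
    calc |Cfun l η q (s k)| * ‖s k‖ ≤ 1 * ‖s k‖ :=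
          mul_le_mul_of_nonneg_right (habs1 k) (norm_nonneg _)
      _ = ‖s k‖ := one_mul _
  have hmono' : ∀ k k', K ≤ k → k ≤ k' → ‖s k'‖ ≤ ‖s k‖ := by
    intro k k' hKk hkk'
    induction k', hkk' using Nat.le_induction with
    | base => exact le_refl _
    | succ n hn ih => exact le_trans (hmono n (le_trans hKk hn)) ih
  -- Step 2: s → 0
  have hstend : Tendsto s atTop (nhds 0) := by
    rw [Metric.tendsto_atTop]
    intro ε hε
    suffices hex : ∃ k0, K ≤ k0 ∧ ‖s k0‖ < ε by
      obtain ⟨k0, hk0K, hk0⟩ := hex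
      exact ⟨k0, fun n hn => by
        rw [dist_zero_right]; exact lt_of_le_of_lt (hmono' k0 n hk0K hn) hk0⟩
    by_contra hno
    push_neg at hno
    set Mv := (‖s K‖ ^ 2) ^ (1 - 1 / q) with hMv
    set m := (ε ^ 2) ^ (1 - 1 / q) with hm
    have hεK : ε ≤ ‖s K‖ := hno K le_rfl
    have hm0 : 0 < m := Real.rpow_pos_of_pos (by positivity) _
    have hmM : m ≤ Mv := Real.rpow_le_rpow (by positivity) (by nlinarith) hp.le
    set c := 1 - 2 * (min m η / (Mv + η)) with hc
    have hMv0 : 0 < Mv + η := by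
      have : 0 < Mv := lt_of_lt_of_le hm0 hmM
      linarith
    have hc1 : c < 1 := by
      have h1 : 0 < min m η := lt_min hm0 hη
      have : 0 < min m η / (Mv + η) := div_pos h1 hMv0
      rw [hc]; linarith
    have hc0 : 0 ≤ c :=
      le_trans (abs_nonneg _) (absC_le_stmt18 η hη m m Mv hm0 le_rfl hmM)
    have hbound : ∀ n, ‖s (K + n)‖ ≤ c ^ n * ‖s K‖ := by
      intro n
      induction n with
      | zero => simp
      | succ n ih =>
          have hKn : K ≤ K + n := Nat.le_add_right _ _
          have hcn1 : c ^ n ≤ 1 := pow_le_one₀ hc0 hc1.le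
          have htK : ‖s (K + n)‖ ≤ ‖s K‖ :=
            le_trans ih (by nlinarith [norm_nonneg (s K)])
          have hεn : ε ≤ ‖s (K + n)‖ := hno _ hKn
          have hinner : ⟪s (K + n), s (K + n)⟫_ℝ = ‖s (K + n)‖ ^ 2 :=
            real_inner_self_eq_norm_sq _
          have hma : m ≤ (‖s (K + n)‖ ^ 2) ^ (1 - 1 / q) :=
            Real.rpow_le_rpow (by positivity) (by nlinarith) hp.le
          have haM : (‖s (K + n)‖ ^ 2) ^ (1 - 1 / q) ≤ Mv :=
            Real.rpow_le_rpow (by positivity) (by nlinarith) hp.le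
          have hCb : |Cfun l η q (s (K + n))| ≤ c := by
            rw [Cfun, hinner]
            exact absC_le_stmt18 η hη _ m Mv hm0 hma haM
          have heq : ‖s (K + n + 1)‖ = |Cfun l η q (s (K + n))| * ‖s (K + n)‖ := by
            rw [key _ hKn, norm_smul, Real.norm_eq_abs]
          calc ‖s (K + (n + 1))‖ = |Cfun l η q (s (K + n))| * ‖s (K + n)‖ := heq
            _ ≤ c * (c ^ n * ‖s K‖) :=
                mul_le_mul hCb ih (norm_nonneg _) (le_trans (abs_nonneg _) hCb)
            _ = c ^ (n + 1) * ‖s K‖ := by ring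
    have hlim : Tendsto (fun n => c ^ n * ‖s K‖) atTop (nhds 0) := by
      simpa using (tendsto_pow_atTop_nhds_zero_of_lt_one hc0 hc1).mul_const ‖s K‖
    obtain ⟨n, hn⟩ := (hlim.eventually (gt_mem_nhds hε)).exists
    exact absurd (le_trans (hno (K + n) (Nat.le_add_right _ _)) (hbound n)) (not_le.mpr hn)
  -- Step 3: e → 0
  have hrec : ∀ k, e (k + 1) = (1 - μ) • e k + s k := by
    intro k
    linear_combination (norm := module) - hs k
  have hnorm : ∀ n, ‖e (n + 1)‖ ≤ (1 - μ) * ‖e n‖ + ‖s n‖ := by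
    intro n
    rw [hrec n]
    calc ‖(1 - μ) • e n + s n‖ ≤ ‖(1 - μ) • e n‖ + ‖s n‖ := norm_add_le _ _
      _ = (1 - μ) * ‖e n‖ + ‖s n‖ := by
          rw [norm_smul, Real.norm_eq_abs, abs_of_pos (by linarith)]
  have hfin := helperA_stmt18 (1 - μ) (by linarith) (by linarith)
    (fun n => ‖e n‖) (fun n => ‖s n‖) (fun n => norm_nonneg _) hnorm
    (by simpa using hstend.norm)
  exact tendsto_zero_iff_norm_tendsto_zero.mpr hfin
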